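/- Let p, q : ℝⁿ → [1,∞] be measurable exponents. Then for every (f_j)_{j∈ℕ₀} ∈ ℓ^{q(·)}(L^{p(·)}), ‖(f_j)_j‖_{ℓ^{q(·)}(L^{p(·)})} ≈ sup { Σ_{j=0}^∞ ∫_{ℝⁿ} |f_j(x)||g_j(x)| dx : ‖(g_j)_j‖_{ℓ^{q′(·)}(L^{p′(·)})} ≤ 1 }, with implicit constants independent of (f_j)_j. -/

import Mathlib

open MeasureTheory ENNReal Filter
open scoped SchwartzMap FourierTransform

noncomputable section

/-- Euclidean space ℝⁿ. -/
abbrev En (n : ℕ) := EuclideanSpace ℝ (Fin n)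

/-- `ω_p(t)`: `t^p` for finite `p`; for `p = ∞` it is `0` if `t ≤ 1` and `∞` otherwise. -/
def omegaP (p t : ℝ≥0∞) : ℝ≥0∞ :=
  if p = ∞ then (if t ≤ 1 then 0 else ∞) else t ^ p.toReal

/-- Variable exponent modular `ρ_{p(·)}` on nonnegative (ℝ≥0∞-valued) functions. -/
def rhoP {n : ℕ} (p : En n → ℝ≥0∞) (F : En n → ℝ≥0∞) : ℝ≥0∞ :=
  ∫⁻ x, omegaP (p x) (F x)

/-- Luxemburg norm for the variable exponent Lebesgue space. -/
def luxNorm {n : ℕ} (p : En n → ℝ≥0∞) (F : En n → ℝ≥0∞) : ℝ≥0∞ :=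
  sInf {l : ℝ≥0∞ | 0 < l ∧ rhoP p (fun x => F x / l) ≤ 1}

/-- The nonnegative absolute value of a real function, as an ℝ≥0∞-valued function. -/
def nnAbs {n : ℕ} (f : En n → ℝ) : En n → ℝ≥0∞ := fun x => ENNReal.ofReal |f x|

/-- Modular of the mixed Lebesgue-sequence space `ℓ^{q(·)}(L^{p(·)})`
(convention `λ^{1/∞} = λ^0 = 1`). -/
def mixedModular {n : ℕ} (q p : En n → ℝ≥0∞) (F : ℕ → En n → ℝ≥0∞) : ℝ≥0∞ :=
  ∑' j, sInf {l : ℝ≥0∞ | 0 < l ∧ rhoP p (fun x => F j x / l ^ ((q x)⁻¹).toReal) ≤ 1}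

/-- Quasi-norm of the mixed Lebesgue-sequence space `ℓ^{q(·)}(L^{p(·)})`. -/
def mixedNorm {n : ℕ} (q p : En n → ℝ≥0∞) (F : ℕ → En n → ℝ≥0∞) : ℝ≥0∞ :=
  sInf {m : ℝ≥0∞ | 0 < m ∧ mixedModular q p (fun j x => F j x / m) ≤ 1}

/-- `g` is locally log-Hölder continuous with constant `c`. -/
def LocLogHolder {n : ℕ} (c : ℝ) (g : En n → ℝ) : Prop :=
  0 < c ∧ ∀ x y : En n, |g x - g y| ≤ c / Real.log (Real.exp 1 + 1 / ‖x - y‖)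

/-- `g ∈ C^log_loc(ℝⁿ)`. -/
def ClogLoc {n : ℕ} (g : En n → ℝ) : Prop := ∃ c, LocLogHolder c g

/-- `g` is globally log-Hölder continuous: locally log-Hölder plus the log-Hölder
decay condition at infinity. -/
def GlobLogHolder {n : ℕ} (g : En n → ℝ) : Prop :=
  ClogLoc g ∧ ∃ c g_inf : ℝ, 0 < c ∧ ∀ x : En n, |g x - g_inf| ≤ c / Real.log (Real.exp 1 + ‖x‖)

/-- A measurable variable exponent `p : ℝⁿ → [1,∞]`. -/
def IsExponent {n : ℕ} (p : En n → ℝ≥0∞) : Prop := Measurable p ∧ ∀ x, 1 ≤ p x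

/-- `p ∈ 𝒫^log(ℝⁿ)`: a variable exponent with `1/p` globally log-Hölder continuous. -/
def Plog {n : ℕ} (p : En n → ℝ≥0∞) : Prop :=
  IsExponent p ∧ GlobLogHolder (fun x => ((p x)⁻¹).toReal)

/-- Convolution of two real functions. -/
def conv {n : ℕ} (φ f : En n → ℝ) (x : En n) : ℝ := ∫ y, φ (x - y) * f y

/-- Partial derivative in the `k`-th coordinate direction. -/
def pderiv {n : ℕ} (k : Fin n) (f : En n → ℝ) (x : En n) : ℝ :=
  fderiv ℝ f x (EuclideanSpace.single k 1)

/-- Besov quasi-norm with variable smoothness and integrability, relative to a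
system `(φ_j)_j`. -/
def besovNorm {n : ℕ} (φ : ℕ → En n → ℝ) (s : En n → ℝ) (q p : En n → ℝ≥0∞)
    (g : En n → ℝ) : ℝ≥0∞ :=
  mixedNorm q p (fun j x => ENNReal.ofReal ((2:ℝ) ^ ((j:ℝ) * s x) * |conv (φ j) g x|))

/-- A smooth dyadic resolution of unity `(ℱφ_j)_j`. -/
structure DyadicResolution (n : ℕ) where
  φ : ℕ → 𝓢(En n, ℝ)
  supp_zero : ∀ ξ : En n, 2 < ‖ξ‖ → 𝓕 (fun y => (φ 0 y : ℂ)) ξ = 0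
  supp_pos : ∀ j : ℕ, 0 < j → ∀ ξ : En n,
      (‖ξ‖ < (2:ℝ) ^ ((j:ℤ) - 1) ∨ (2:ℝ) ^ ((j:ℤ) + 1) < ‖ξ‖) →
      𝓕 (fun y => (φ j y : ℂ)) ξ = 0
  sum_one : ∀ ξ : En n, ∑' j, 𝓕 (fun y => (φ j y : ℂ)) ξ = 1

/-- The commutator `[V·∇, Δ_j]f` relative to a convolution kernel `φj`. -/
def commVf {n : ℕ} (φj : En n → ℝ) (V : Fin n → En n → ℝ) (f : En n → ℝ)
    (x : En n) : ℝ :=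
  ∑ k, (V k x * pderiv k (conv φj f) x - conv φj (fun y => V k y * pderiv k f y) x)

end

/-!
Upper bound. Write `θ = 1/q`, `θ' = 1/q'`, so `θ + θ' = 1`. If `λ, κ` lie above the `j`-th layer
modulars of `f` and `g`, then `|f_j g_j| ≤ λ^θ κ^θ' · (|f_j|/λ^θ)(|g_j|/κ^θ')`, where
`λ^θ κ^θ' ≤ λ + κ` and, by Young's inequality `ab ≤ ω_p(a) + ω_{p'}(b)`, the remaining factor
integrates to at most `2`. Summing over `j`, the pairing is at most twice the sum of the two
modulars, hence at most `4 ‖f‖ ‖g‖` by homogeneity.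

Lower bound. If `m < ‖f‖`, the modular of `f/m` exceeds `1`, so there are weights `l_j` with
`∑ l_j = 1`, each strictly below the `j`-th layer modular; thus `ρ_p(f_j/(m l_j^θ)) > 1`. A function
`G_j` with `ρ_{p'}(G_j) ≤ 1` and `∫ f_j G_j /(m l_j^θ) ≥ 1` is then either the normalised indicator
of a piece of `{p = ∞, |f_j| > m l_j^θ}` of finite positive measure, or the extremal function
`H^{p-1}/ρ_p(H)` of Hölder's inequality for a truncation `H` of `f_j/(m l_j^θ)` whose modular is
finite and still exceeds `1`. The sequence `g_j = l_j^θ' G_j` has modular at most `∑ l_j = 1` and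
pairs with `f` to at least `m`.
-/

lemma omegaP_zero {p : ℝ≥0∞} (hp : p ≠ 0) : omegaP p 0 = 0 := by
  by_cases h : p = ∞
  · simp [omegaP, h]
  · simp [omegaP, h, ENNReal.zero_rpow_of_pos (ENNReal.toReal_pos hp h)]

lemma omegaP_one (t : ℝ≥0∞) : omegaP 1 t = t := by
  simp [omegaP]

lemma omegaP_mono (p : ℝ≥0∞) : Monotone (omegaP p) := by
  intro a b hab
  by_cases h : p = ∞
  · simp only [omegaP, h, if_true]
    by_cases hb : b ≤ 1
    · simp [hb, hab.trans hb]
    · simp [hb]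
  · simp only [omegaP, h, if_false]
    exact ENNReal.rpow_le_rpow hab ENNReal.toReal_nonneg

lemma measurable_omegaP {α : Type*} [MeasurableSpace α] {p t : α → ℝ≥0∞} (hp : Measurable p)
    (ht : Measurable t) : Measurable fun x => omegaP (p x) (t x) :=
  Measurable.ite (hp (measurableSet_singleton ∞))
    (Measurable.ite (measurableSet_le ht measurable_const) measurable_const measurable_const)
    (ht.pow hp.ennreal_toReal)

lemma mul_le_omegaP_top_add_omegaP_one (a b : ℝ≥0∞) : a * b ≤ omegaP ∞ a + omegaP 1 b := by
  rw [omegaP_one]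
  by_cases ha : a ≤ 1
  · simpa [omegaP, ha] using mul_le_of_le_one_left' ha
  · simp [omegaP, ha]

lemma mul_le_omegaP_add_omegaP {p q : ℝ≥0∞} (hpq : p.HolderConjugate q) (a b : ℝ≥0∞) :
    a * b ≤ omegaP p a + omegaP q b := by
  rcases eq_or_ne p ∞ with rfl | hp
  · rw [(HolderConjugate.eq_top_iff_eq_one ∞ q).1 rfl]
    exact mul_le_omegaP_top_add_omegaP_one a b
  rcases eq_or_ne q ∞ with rfl | hq
  · rw [(HolderConjugate.eq_top_iff_eq_one ∞ p).1 rfl, mul_comm, add_comm]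
    exact mul_le_omegaP_top_add_omegaP_one b a
  have hpq' := HolderConjugate.toReal_of_ne_top hp hq
  have one_le_ofReal {r : ℝ} (hr : 1 < r) : 1 ≤ ENNReal.ofReal r := by
    simpa using ENNReal.ofReal_le_ofReal hr.le
  calc a * b ≤ a ^ p.toReal / .ofReal p.toReal + b ^ q.toReal / .ofReal q.toReal :=
        ENNReal.young_inequality a b hpq'
    _ ≤ omegaP p a + omegaP q b := by
        simp only [omegaP, hp, hq, if_false]
        gcongr <;> refine ENNReal.div_le_of_le_mul (le_mul_of_one_le_right' (one_le_ofReal ?_))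
        exacts [hpq'.lt, hpq'.symm.lt]

lemma omegaP_rpow_sub_one_div_le {p q : ℝ≥0∞} (hpq : p.HolderConjugate q) (hp : p ≠ ∞)
    {T : ℝ≥0∞} (hT : 1 ≤ T) (t : ℝ≥0∞) :
    omegaP q (t ^ (p.toReal - 1) / T) ≤ omegaP p t / T := by
  rcases eq_or_ne q ∞ with rfl | hq
  · have hp1 : p = 1 := (HolderConjugate.eq_top_iff_eq_one ∞ p).1 rfl
    simp [omegaP, hp1, ENNReal.inv_le_one.2 hT]
  have hpq' := HolderConjugate.toReal_of_ne_top hp hq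
  simp only [omegaP, hp, hq, if_false]
  rw [ENNReal.div_rpow_of_nonneg _ _ hpq'.symm.nonneg, ← ENNReal.rpow_mul,
    hpq'.sub_one_mul_conj]
  gcongr
  calc T = T ^ (1 : ℝ) := (ENNReal.rpow_one T).symm
    _ ≤ T ^ q.toReal := ENNReal.rpow_le_rpow_of_exponent_le hT hpq'.symm.lt.le

lemma toReal_inv_add_toReal_inv {p q : ℝ≥0∞} (hpq : p.HolderConjugate q) :
    (p⁻¹).toReal + (q⁻¹).toReal = 1 := by
  rw [← ENNReal.toReal_add (by simp [HolderConjugate.ne_zero p q])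
    (by simp [HolderConjugate.ne_zero q p]), hpq.inv_add_inv_eq_one, ENNReal.toReal_one]

lemma rpow_mul_rpow_le_add {a b : ℝ≥0∞} {θ θ' : ℝ} (hθ : 0 ≤ θ) (hθ' : 0 ≤ θ')
    (hθθ' : θ + θ' = 1) : a ^ θ * b ^ θ' ≤ a + b := by
  calc a ^ θ * b ^ θ' ≤ max a b ^ θ * max a b ^ θ' := by gcongr <;> simp
    _ = max a b := by rw [← ENNReal.rpow_add_of_nonneg _ _ hθ hθ', hθθ', ENNReal.rpow_one]
    _ ≤ a + b := max_le le_self_add le_add_self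

lemma exists_tsum_eq_one_of_one_lt_tsum {Λ : ℕ → ℝ≥0∞} (h : 1 < ∑' j, Λ j) :
    ∃ l : ℕ → ℝ≥0∞, ∑' j, l j = 1 ∧ ∀ j, l j = 0 ∨ l j < Λ j := by
  obtain ⟨t, ht⟩ := lt_iSup_iff.1 (ENNReal.tsum_eq_iSup_sum ▸ h)
  -- capping the terms at `2` keeps the partial sum above `1` and makes it finite
  set a := fun j => min (Λ j) 2
  set S := ∑ j ∈ t, a j
  have hS1 : 1 < S := by
    by_cases h2 : ∃ j ∈ t, 2 ≤ Λ j
    · obtain ⟨j, hj, hj2⟩ := h2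
      calc 1 < (2 : ℝ≥0∞) := one_lt_two
        _ = a j := (min_eq_right hj2).symm
        _ ≤ S := Finset.single_le_sum (fun _ _ => zero_le) hj
    · push Not at h2
      calc 1 < ∑ j ∈ t, Λ j := ht
        _ = S := Finset.sum_congr rfl fun j hj => (min_eq_left (h2 j hj).le).symm
  have ha : ∀ j, a j ≠ ∞ := fun j => ne_top_of_le_ne_top ofNat_ne_top (min_le_right _ _)
  have hS : S ≠ ∞ := ENNReal.sum_ne_top.2 fun j _ => ha j
  refine ⟨fun j => if j ∈ t then a j / S else 0, ?_, fun j => ?_⟩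
  · rw [tsum_eq_sum (s := t) fun j hj => if_neg hj, Finset.sum_congr rfl fun j hj => if_pos hj]
    simp_rw [div_eq_mul_inv, ← Finset.sum_mul]
    exact ENNReal.mul_inv_cancel (zero_lt_one.trans hS1).ne' hS
  · by_cases hj : j ∈ t
    · rcases eq_or_ne (Λ j) 0 with h0 | h0
      · left
        simp [hj, a, h0]
      · right
        have ha0 : a j ≠ 0 := by simp [a, h0]
        simp only [hj, if_true]
        calc a j / S < a j := ENNReal.div_lt_of_lt_mul
              (by simpa [mul_comm] using ENNReal.mul_lt_mul_left ha0 (ha j) hS1)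
          _ ≤ Λ j := min_le_left _ _
    · left
      simp [hj]

section

variable {n : ℕ}

lemma rhoP_mono (p : En n → ℝ≥0∞) {F G : En n → ℝ≥0∞} (h : ∀ x, F x ≤ G x) :
    rhoP p F ≤ rhoP p G :=
  lintegral_mono fun x => omegaP_mono (p x) (h x)

lemma rhoP_zero {p : En n → ℝ≥0∞} (hp : ∀ x, p x ≠ 0) : rhoP p (fun _ => 0) = 0 := by
  simp [rhoP, omegaP_zero (hp _)]

lemma lintegral_mul_le_rhoP_add_rhoP {p q : En n → ℝ≥0∞} (hp : Measurable p)
    (hpq : ∀ x, (p x).HolderConjugate (q x)) {F G : En n → ℝ≥0∞} (hF : Measurable F) :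
    ∫⁻ x, F x * G x ≤ rhoP p F + rhoP q G :=
  calc ∫⁻ x, F x * G x ≤ ∫⁻ x, (omegaP (p x) (F x) + omegaP (q x) (G x)) :=
        lintegral_mono fun x => mul_le_omegaP_add_omegaP (hpq x) (F x) (G x)
    _ = rhoP p F + rhoP q G := lintegral_add_left (measurable_omegaP hp hF) _

lemma exists_norming_of_subset_eq_top {p q : En n → ℝ≥0∞} (hpq : ∀ x, (p x).HolderConjugate (q x))
    {h : En n → ℝ≥0∞} {A : Set (En n)} (hA : MeasurableSet A) (hA0 : volume A ≠ 0)
    (hAt : volume A ≠ ∞) (hAp : ∀ x ∈ A, p x = ∞) (hAh : ∀ x ∈ A, 1 ≤ h x) :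
    ∃ G : En n → ℝ≥0∞, Measurable G ∧ (∀ x, G x ≠ ∞) ∧ rhoP q G ≤ 1 ∧
      1 ≤ ∫⁻ x, h x * G x := by
  set G := A.indicator fun _ => (volume A)⁻¹
  have hGint : ∫⁻ x, G x = 1 := by
    rw [lintegral_indicator hA, setLIntegral_const, ENNReal.inv_mul_cancel hA0 hAt]
  have hωG : ∀ x, omegaP (q x) (G x) = G x := by
    intro x
    have := hpq x
    by_cases hx : x ∈ A
    · rw [(HolderConjugate.eq_top_iff_eq_one (p x) (q x)).1 (hAp x hx), omegaP_one]
    · simp [G, hx, omegaP_zero (HolderConjugate.ne_zero (q x) (p x))]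
  refine ⟨G, measurable_const.indicator hA, fun x => ?_, ?_, ?_⟩
  · by_cases hx : x ∈ A <;> simp [G, hx, hA0]
  · simp only [rhoP, hωG, hGint, le_refl]
  · refine hGint.symm.le.trans (lintegral_mono fun x => ?_)
    by_cases hx : x ∈ A
    · exact le_mul_of_one_le_left' (hAh x hx)
    · simp [G, hx]

lemma exists_norming_of_rhoP_ne_top {p q : En n → ℝ≥0∞} (hp : Measurable p)
    (hpq : ∀ x, (p x).HolderConjugate (q x)) {H : En n → ℝ≥0∞} (hH : Measurable H)
    (hHfin : ∀ x, H x ≠ ∞) (hHp : ∀ x, p x = ∞ → H x = 0) (hT1 : 1 ≤ rhoP p H)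
    (hT : rhoP p H ≠ ∞) :
    ∃ G : En n → ℝ≥0∞, Measurable G ∧ (∀ x, G x ≠ ∞) ∧ rhoP q G ≤ 1 ∧
      1 ≤ ∫⁻ x, H x * G x := by
  set T := rhoP p H
  have hT0 : T ≠ 0 := (zero_lt_one.trans_le hT1).ne'
  -- the extremal function `H^{p-1}/ρ_p(H)` of Hölder's inequality
  set G : En n → ℝ≥0∞ := fun x => if p x = ∞ then 0 else H x ^ ((p x).toReal - 1) / T
  have hexp : ∀ x, p x ≠ ∞ → 0 ≤ (p x).toReal - 1 := fun x hx => by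
    have := hpq x
    simpa using ENNReal.toReal_mono hx (HolderConjugate.one_le (p x) (q x))
  have hmul : ∀ x, H x * G x = omegaP (p x) (H x) / T := by
    intro x
    by_cases hx : p x = ∞
    · simp [G, hx, hHp x hx, omegaP]
    · simp only [G, omegaP, hx, if_false]
      rw [← mul_div_assoc]
      congr 1
      calc H x * H x ^ ((p x).toReal - 1) = H x ^ (1 + ((p x).toReal - 1)) := by
            rw [ENNReal.rpow_add_of_nonneg _ _ zero_le_one (hexp x hx), ENNReal.rpow_one]
        _ = H x ^ (p x).toReal := by rw [add_sub_cancel]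
  have hωG : ∀ x, omegaP (q x) (G x) ≤ omegaP (p x) (H x) / T := by
    intro x
    by_cases hx : p x = ∞
    · have := hpq x
      simp [G, hx, omegaP_zero (HolderConjugate.ne_zero (q x) (p x))]
    · simpa [G, hx] using omegaP_rpow_sub_one_div_le (hpq x) hx hT1 (H x)
  have hdivT : ∫⁻ x, omegaP (p x) (H x) / T = 1 := by
    simp_rw [div_eq_mul_inv]
    rw [lintegral_mul_const' _ _ (ENNReal.inv_ne_top.2 hT0)]
    exact ENNReal.mul_inv_cancel hT0 hT
  refine ⟨G, ?_, fun x => ?_, (lintegral_mono hωG).trans hdivT.le,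
    ((lintegral_congr hmul).trans hdivT).ge⟩
  · exact Measurable.ite (hp (measurableSet_singleton ∞)) measurable_const
      ((hH.pow (hp.ennreal_toReal.sub_const 1)).div measurable_const)
  · by_cases hx : p x = ∞
    · simp [G, hx]
    · simp only [G, hx, if_false]
      exact ENNReal.div_ne_top (ENNReal.rpow_ne_top_of_nonneg (hexp x hx) (hHfin x)) hT0

lemma rhoP_indicator_ne_top {p h : En n → ℝ≥0∞} (hp1 : ∀ x, 1 ≤ p x) (k : ℕ) :
    rhoP p ({x | p x ≤ k ∧ h x ≤ k ∧ ‖x‖ ≤ k}.indicator h) ≠ ∞ := by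
  set D := {x | p x ≤ k ∧ h x ≤ k ∧ ‖x‖ ≤ k}
  have hbound : ∀ x, omegaP (p x) (D.indicator h x) ≤
      (Metric.closedBall 0 k).indicator (fun _ => ((k : ℝ≥0∞) + 1) ^ (k : ℝ)) x := by
    intro x
    by_cases hx : x ∈ D
    · have hpx : p x ≠ ∞ := (hx.1.trans_lt (ENNReal.natCast_lt_top k)).ne
      rw [Set.indicator_of_mem (mem_closedBall_zero_iff.2 hx.2.2)]
      simp only [Set.indicator_of_mem hx, omegaP, hpx, if_false]
      calc h x ^ (p x).toReal ≤ ((k : ℝ≥0∞) + 1) ^ (p x).toReal :=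
            ENNReal.rpow_le_rpow (hx.2.1.trans le_self_add) ENNReal.toReal_nonneg
        _ ≤ ((k : ℝ≥0∞) + 1) ^ (k : ℝ) :=
            ENNReal.rpow_le_rpow_of_exponent_le le_add_self
              (by simpa using ENNReal.toReal_mono (ENNReal.natCast_ne_top k) hx.1)
    · simp [hx, omegaP_zero (zero_lt_one.trans_le (hp1 x)).ne']
  refine ((lintegral_mono hbound).trans_lt ?_).ne
  rw [lintegral_indicator measurableSet_closedBall, setLIntegral_const]
  exact ENNReal.mul_lt_top (ENNReal.rpow_lt_top_of_nonneg (Nat.cast_nonneg k)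
    (by simp)) measure_closedBall_lt_top

lemma exists_truncation_one_lt_rhoP {p : En n → ℝ≥0∞} (hp : Measurable p) (hp1 : ∀ x, 1 ≤ p x)
    {h : En n → ℝ≥0∞} (hh : Measurable h) (hfin : ∀ x, h x ≠ ∞)
    (hA : volume ({x | p x = ∞} ∩ {x | 1 < h x}) = 0) (hρ : 1 < rhoP p h) :
    ∃ H : En n → ℝ≥0∞, Measurable H ∧ (∀ x, H x ≤ h x) ∧ (∀ x, p x = ∞ → H x = 0) ∧
      1 < rhoP p H ∧ rhoP p H ≠ ∞ := by
  set D : ℕ → Set (En n) := fun k => {x | p x ≤ k ∧ h x ≤ k ∧ ‖x‖ ≤ k}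
  set Hk : ℕ → En n → ℝ≥0∞ := fun k => (D k).indicator h
  have hDm : ∀ k, MeasurableSet (D k) := fun k =>
    (measurableSet_le hp measurable_const).inter ((measurableSet_le hh measurable_const).inter
      (measurableSet_le measurable_norm measurable_const))
  have hHkm : ∀ k, Measurable (Hk k) := fun k => hh.indicator (hDm k)
  have hD_mono : Monotone D := fun k k' hkk x ⟨h₁, h₂, h₃⟩ =>
    ⟨h₁.trans (by exact_mod_cast hkk), h₂.trans (by exact_mod_cast hkk),
      h₃.trans (by exact_mod_cast hkk)⟩
  have hHk_mono : ∀ x, Monotone fun k => omegaP (p x) (Hk k x) := fun x k k' hkk =>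
    omegaP_mono _ (Set.indicator_le_indicator_of_subset (hD_mono hkk) (fun _ => zero_le) x)
  have hnotD : ∀ x k, p x = ∞ → x ∉ D k := fun x k hx hk =>
    (hk.1.trans_lt (ENNReal.natCast_lt_top k)).ne hx
  have hsup : ∀ᵐ x, ⨆ k, omegaP (p x) (Hk k x) = omegaP (p x) (h x) := by
    filter_upwards [measure_eq_zero_iff_ae_notMem.1 hA] with x hx
    by_cases hpx : p x = ∞
    · have hx1 : h x ≤ 1 := not_lt.1 fun h1 => hx ⟨hpx, h1⟩
      simp [Hk, hnotD x _ hpx, hpx, hx1, omegaP]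
    · have hxD : ∀ᶠ k in atTop, x ∈ D k :=
        ((ENNReal.tendsto_nat_nhds_top.eventually
            (eventually_gt_nhds (lt_top_iff_ne_top.2 hpx))).and
          ((ENNReal.tendsto_nat_nhds_top.eventually (eventually_gt_nhds (hfin x).lt_top)).and
            (tendsto_natCast_atTop_atTop.eventually_ge_atTop ‖x‖))).mono
          fun k hk => ⟨hk.1.le, hk.2.1.le, hk.2.2⟩
      refine iSup_eq_of_tendsto (hHk_mono x) (tendsto_const_nhds.congr' ?_)
      filter_upwards [hxD] with k hk
      simp [Hk, hk]
  have hρ_eq : rhoP p h = ⨆ k, rhoP p (Hk k) := by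
    rw [rhoP, ← lintegral_congr_ae hsup,
      lintegral_iSup (fun k => measurable_omegaP hp (hHkm k)) fun k k' hkk x => hHk_mono x hkk]
    rfl
  obtain ⟨k, hk⟩ := lt_iSup_iff.1 (hρ_eq ▸ hρ)
  refine ⟨Hk k, hHkm k, Set.indicator_le_self _ _,
    fun x hx => Set.indicator_of_notMem (hnotD x k hx) _, hk, rhoP_indicator_ne_top hp1 k⟩

lemma exists_norming_of_one_lt_rhoP {p q : En n → ℝ≥0∞} (hp : Measurable p)
    (hpq : ∀ x, (p x).HolderConjugate (q x)) {h : En n → ℝ≥0∞} (hh : Measurable h)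
    (hfin : ∀ x, h x ≠ ∞) (hρ : 1 < rhoP p h) :
    ∃ G : En n → ℝ≥0∞, Measurable G ∧ (∀ x, G x ≠ ∞) ∧ rhoP q G ≤ 1 ∧
      1 ≤ ∫⁻ x, h x * G x := by
  set A := {x | p x = ∞} ∩ {x | 1 < h x}
  by_cases hA : volume A = 0
  · have hp1 : ∀ x, 1 ≤ p x := fun x => have := hpq x; HolderConjugate.one_le (p x) (q x)
    obtain ⟨H, hHm, hHh, hHp, hH1, hHt⟩ := exists_truncation_one_lt_rhoP hp hp1 hh hfin hA hρ
    obtain ⟨G, hGm, hGfin, hGρ, hHG⟩ := exists_norming_of_rhoP_ne_top hp hpq hHm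
      (fun x => ne_top_of_le_ne_top (hfin x) (hHh x)) hHp hH1.le hHt
    exact ⟨G, hGm, hGfin, hGρ, hHG.trans (lintegral_mono fun x => mul_le_mul_left (hHh x) _)⟩
  · have hAm : MeasurableSet A :=
      (hp (measurableSet_singleton ∞)).inter (measurableSet_lt measurable_const hh)
    obtain ⟨B, hBm, hBA, hB0, hBt⟩ :=
      Measure.exists_subset_measure_lt_top hAm (pos_iff_ne_zero.2 hA)
    exact exists_norming_of_subset_eq_top hpq hBm hB0.ne' hBt.ne (fun x hx => (hBA hx).1)
      fun x hx => (hBA hx).2.le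

/-- The `j`-th summand of `mixedModular`, with `θ` in the role of `1/q`. -/
noncomputable def layerModular (p : En n → ℝ≥0∞) (θ : En n → ℝ) (F : En n → ℝ≥0∞) : ℝ≥0∞ :=
  sInf {l : ℝ≥0∞ | 0 < l ∧ rhoP p (fun x => F x / l ^ θ x) ≤ 1}

lemma mixedModular_eq_tsum_layerModular (q p : En n → ℝ≥0∞) (F : ℕ → En n → ℝ≥0∞) :
    mixedModular q p F = ∑' j, layerModular p (fun x => ((q x)⁻¹).toReal) (F j) := rfl

section

variable {p : En n → ℝ≥0∞} {θ : En n → ℝ} {F : En n → ℝ≥0∞} {l : ℝ≥0∞}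

lemma layerModular_le (hl : 0 < l) (h : rhoP p (fun x => F x / l ^ θ x) ≤ 1) :
    layerModular p θ F ≤ l :=
  sInf_le ⟨hl, h⟩

lemma rhoP_div_rpow_le_one_of_layerModular_lt (hθ : ∀ x, 0 ≤ θ x) (h : layerModular p θ F < l) :
    rhoP p (fun x => F x / l ^ θ x) ≤ 1 := by
  obtain ⟨l₀, ⟨-, hl₀⟩, hl₀l⟩ := sInf_lt_iff.1 h
  refine (rhoP_mono p fun x => ?_).trans hl₀
  exact ENNReal.div_le_div_left (ENNReal.rpow_le_rpow hl₀l.le (hθ x)) _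

lemma one_lt_rhoP_div_rpow_of_lt_layerModular (hl : 0 < l) (h : l < layerModular p θ F) :
    1 < rhoP p (fun x => F x / l ^ θ x) :=
  not_le.1 fun h' => (layerModular_le hl h').not_gt h

lemma layerModular_mono {G : En n → ℝ≥0∞} (h : ∀ x, F x ≤ G x) :
    layerModular p θ F ≤ layerModular p θ G :=
  sInf_le_sInf fun _ ⟨hl, hG⟩ =>
    ⟨hl, (rhoP_mono p fun x => ENNReal.div_le_div_right (h x) _).trans hG⟩

lemma layerModular_zero (hp : ∀ x, p x ≠ 0) : layerModular p θ (fun _ => 0) = 0 := by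
  refine le_antisymm (ENNReal.le_of_forall_pos_le_add fun ε hε _ => ?_) zero_le
  rw [zero_add]
  exact layerModular_le (by simpa using hε) (by simp [rhoP_zero hp])

end

section

variable {q p : En n → ℝ≥0∞} {F : ℕ → En n → ℝ≥0∞} {m : ℝ≥0∞}

lemma mixedModular_mono {G : ℕ → En n → ℝ≥0∞} (h : ∀ j x, F j x ≤ G j x) :
    mixedModular q p F ≤ mixedModular q p G :=
  ENNReal.tsum_le_tsum fun j => layerModular_mono (h j)

lemma mixedNorm_le_one_of_mixedModular_le_one (h : mixedModular q p F ≤ 1) : mixedNorm q p F ≤ 1 :=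
  sInf_le ⟨one_pos, by simpa only [div_one] using h⟩

lemma mixedModular_div_le_one_of_mixedNorm_lt (h : mixedNorm q p F < m) :
    mixedModular q p (fun j x => F j x / m) ≤ 1 := by
  obtain ⟨m₀, ⟨-, hm₀⟩, hm₀m⟩ := sInf_lt_iff.1 h
  exact (mixedModular_mono fun j x => ENNReal.div_le_div_left hm₀m.le _).trans hm₀

lemma one_lt_mixedModular_div_of_lt_mixedNorm (hm : 0 < m) (h : m < mixedNorm q p F) :
    1 < mixedModular q p (fun j x => F j x / m) :=
  not_le.1 fun h' => (sInf_le ⟨hm, h'⟩ : mixedNorm q p F ≤ m).not_gt h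

end

lemma lintegral_mul_le_of_rhoP_div_rpow_le_one {p q : En n → ℝ≥0∞} (hp : Measurable p)
    (hpq : ∀ x, (p x).HolderConjugate (q x)) {θ θ' : En n → ℝ} (hθ : Measurable θ)
    (hθ0 : ∀ x, 0 ≤ θ x) (hθ'0 : ∀ x, 0 ≤ θ' x) (hθθ' : ∀ x, θ x + θ' x = 1)
    {F G : En n → ℝ≥0∞} (hF : Measurable F) {l k : ℝ≥0∞} (hl0 : l ≠ 0) (hl : l ≠ ∞)
    (hk0 : k ≠ 0) (hk : k ≠ ∞) (hFl : rhoP p (fun x => F x / l ^ θ x) ≤ 1)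
    (hGk : rhoP q (fun x => G x / k ^ θ' x) ≤ 1) :
    ∫⁻ x, F x * G x ≤ 2 * (l + k) := by
  set F' := fun x => F x / l ^ θ x
  set G' := fun x => G x / k ^ θ' x
  have hpoint : ∀ x, F x * G x ≤ (l + k) * (F' x * G' x) := fun x =>
    calc F x * G x = (l ^ θ x * k ^ θ' x) * (F' x * G' x) := by
          simp only [F', G']
          rw [mul_mul_mul_comm, ENNReal.mul_div_cancel (ENNReal.rpow_pos_of_nonneg
            (pos_iff_ne_zero.2 hl0) (hθ0 x)).ne' (ENNReal.rpow_ne_top_of_nonneg (hθ0 x) hl),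
            ENNReal.mul_div_cancel (ENNReal.rpow_pos_of_nonneg (pos_iff_ne_zero.2 hk0)
            (hθ'0 x)).ne' (ENNReal.rpow_ne_top_of_nonneg (hθ'0 x) hk)]
      _ ≤ (l + k) * (F' x * G' x) := by
          gcongr
          exact rpow_mul_rpow_le_add (hθ0 x) (hθ'0 x) (hθθ' x)
  calc ∫⁻ x, F x * G x ≤ (l + k) * ∫⁻ x, F' x * G' x := by
        rw [← lintegral_const_mul' _ _ (ENNReal.add_ne_top.2 ⟨hl, hk⟩)]
        exact lintegral_mono hpoint
    _ ≤ (l + k) * (rhoP p F' + rhoP q G') := by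
        gcongr
        exact lintegral_mul_le_rhoP_add_rhoP hp hpq
          (hF.div (measurable_const.pow hθ))
    _ ≤ (l + k) * (1 + 1) := by gcongr
    _ = 2 * (l + k) := by rw [one_add_one_eq_two, mul_comm]

lemma lintegral_mul_le_layerModular_add {p q : En n → ℝ≥0∞} (hp : Measurable p)
    (hpq : ∀ x, (p x).HolderConjugate (q x)) {θ θ' : En n → ℝ} (hθ : Measurable θ)
    (hθ0 : ∀ x, 0 ≤ θ x) (hθ'0 : ∀ x, 0 ≤ θ' x) (hθθ' : ∀ x, θ x + θ' x = 1)
    {F G : En n → ℝ≥0∞} (hF : Measurable F) :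
    ∫⁻ x, F x * G x ≤ 2 * (layerModular p θ F + layerModular q θ' G) := by
  refine ENNReal.le_of_forall_pos_le_add fun ε hε hfin => ?_
  set Λ := layerModular p θ F
  set M := layerModular q θ' G
  obtain ⟨hΛ, hM⟩ : Λ ≠ ∞ ∧ M ≠ ∞ := ENNReal.add_ne_top.1 fun h => by simp [h] at hfin
  set δ : ℝ≥0∞ := ε / 4
  have hδ0 : δ ≠ 0 := (ENNReal.div_pos (by simpa using hε.ne') (by norm_num)).ne'
  have hδ : δ ≠ ∞ := ENNReal.div_ne_top ENNReal.coe_ne_top (by norm_num)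
  calc ∫⁻ x, F x * G x ≤ 2 * ((Λ + δ) + (M + δ)) :=
        lintegral_mul_le_of_rhoP_div_rpow_le_one hp hpq hθ hθ0 hθ'0 hθθ' hF
          (by simp [hδ0]) (ENNReal.add_ne_top.2 ⟨hΛ, hδ⟩) (by simp [hδ0])
          (ENNReal.add_ne_top.2 ⟨hM, hδ⟩)
          (rhoP_div_rpow_le_one_of_layerModular_lt hθ0 (ENNReal.lt_add_right hΛ hδ0))
          (rhoP_div_rpow_le_one_of_layerModular_lt hθ'0 (ENNReal.lt_add_right hM hδ0))
    _ = 2 * (Λ + M) + 4 * δ := by ring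
    _ = 2 * (Λ + M) + ε := by rw [ENNReal.mul_div_cancel (by norm_num) (by norm_num)]

lemma tsum_lintegral_mul_le_mixedModular_add {p q p' q' : En n → ℝ≥0∞} (hp : Measurable p)
    (hq : Measurable q) (hpp' : ∀ x, (p x).HolderConjugate (p' x))
    (hqq' : ∀ x, (q x).HolderConjugate (q' x)) {F G : ℕ → En n → ℝ≥0∞}
    (hF : ∀ j, Measurable (F j)) :
    ∑' j, ∫⁻ x, F j x * G j x ≤ 2 * (mixedModular q p F + mixedModular q' p' G) := by
  rw [mixedModular_eq_tsum_layerModular, mixedModular_eq_tsum_layerModular,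
    ← ENNReal.tsum_add, ← ENNReal.tsum_mul_left]
  exact ENNReal.tsum_le_tsum fun j => lintegral_mul_le_layerModular_add hp hpp'
    hq.inv.ennreal_toReal (fun _ => ENNReal.toReal_nonneg) (fun _ => ENNReal.toReal_nonneg)
    (fun x => toReal_inv_add_toReal_inv (hqq' x)) (hF j)

lemma tsum_lintegral_mul_le_mixedNorm_mul {p q p' q' : En n → ℝ≥0∞} (hp : Measurable p)
    (hq : Measurable q) (hpp' : ∀ x, (p x).HolderConjugate (p' x))
    (hqq' : ∀ x, (q x).HolderConjugate (q' x)) {F G : ℕ → En n → ℝ≥0∞}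
    (hF : ∀ j, Measurable (F j)) (hFt : mixedNorm q p F ≠ ∞) (hGt : mixedNorm q' p' G ≠ ∞) :
    ∑' j, ∫⁻ x, F j x * G j x ≤ 4 * (mixedNorm q p F * mixedNorm q' p' G) := by
  rw [mul_comm, ← ENNReal.div_le_iff (by norm_num) (by norm_num)]
  refine ENNReal.le_mul_of_forall_lt (.inr hGt) (.inl hFt) fun a ha b hb => ?_
  have ha0 : a ≠ 0 := (zero_le.trans_lt ha).ne'
  have hb0 : b ≠ 0 := (zero_le.trans_lt hb).ne'
  rcases eq_or_ne a ∞ with rfl | hat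
  · simp [ENNReal.top_mul hb0]
  rcases eq_or_ne b ∞ with rfl | hbt
  · simp [ENNReal.mul_top ha0]
  have hscale : ∀ j x, F j x * G j x = (a * b) * ((F j x / a) * (G j x / b)) := fun j x => by
    rw [mul_mul_mul_comm, ENNReal.mul_div_cancel ha0 hat, ENNReal.mul_div_cancel hb0 hbt]
  refine ENNReal.div_le_of_le_mul ?_
  calc ∑' j, ∫⁻ x, F j x * G j x
      = (a * b) * ∑' j, ∫⁻ x, (F j x / a) * (G j x / b) := by
        simp_rw [hscale, lintegral_const_mul' _ _ (ENNReal.mul_ne_top hat hbt)]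
        exact ENNReal.tsum_mul_left
    _ ≤ (a * b) * (2 * (1 + 1)) := by
        gcongr
        exact (tsum_lintegral_mul_le_mixedModular_add hp hq hpp' hqq'
          fun j => (hF j).div measurable_const).trans
          (by gcongr; exacts [mixedModular_div_le_one_of_mixedNorm_lt ha,
            mixedModular_div_le_one_of_mixedNorm_lt hb])
    _ = a * b * 4 := by norm_num

lemma exists_layer_norming {p q : En n → ℝ≥0∞} (hp : Measurable p)
    (hpq : ∀ x, (p x).HolderConjugate (q x)) {θ θ' : En n → ℝ} (hθ : Measurable θ)
    (hθ' : Measurable θ') (hθ0 : ∀ x, 0 ≤ θ x) (hθ'0 : ∀ x, 0 ≤ θ' x)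
    (hθθ' : ∀ x, θ x + θ' x = 1) {H : En n → ℝ≥0∞} (hH : Measurable H)
    (hHfin : ∀ x, H x ≠ ∞) {l : ℝ≥0∞} (hl : l = 0 ∨ l < layerModular p θ H) :
    ∃ G : En n → ℝ≥0∞, Measurable G ∧ (∀ x, G x ≠ ∞) ∧ layerModular q θ' G ≤ l ∧
      l ≤ ∫⁻ x, H x * G x := by
  rcases eq_or_ne l 0 with rfl | hl0
  · have hq0 : ∀ x, q x ≠ 0 := fun x => have := hpq x; HolderConjugate.ne_zero (q x) (p x)
    exact ⟨fun _ => 0, measurable_const, fun _ => zero_ne_top,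
      (layerModular_zero hq0).le, zero_le⟩
  have hlΛ := hl.resolve_left hl0
  have hlt : l ≠ ∞ := hlΛ.ne_top
  have hpow0 : ∀ r : ℝ, 0 ≤ r → l ^ r ≠ 0 := fun r hr =>
    (ENNReal.rpow_pos_of_nonneg (pos_iff_ne_zero.2 hl0) hr).ne'
  have hpowt : ∀ r : ℝ, 0 ≤ r → l ^ r ≠ ∞ := fun r hr => ENNReal.rpow_ne_top_of_nonneg hr hlt
  obtain ⟨G, hGm, hGfin, hGρ, hGint⟩ := exists_norming_of_one_lt_rhoP (h := fun x => H x / l ^ θ x)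
    hp hpq (hH.div (measurable_const.pow hθ))
    (fun x => ENNReal.div_ne_top (hHfin x) (hpow0 _ (hθ0 x)))
    (one_lt_rhoP_div_rpow_of_lt_layerModular (pos_iff_ne_zero.2 hl0) hlΛ)
  refine ⟨fun x => l ^ θ' x * G x, (measurable_const.pow hθ').mul hGm,
    fun x => ENNReal.mul_ne_top (hpowt _ (hθ'0 x)) (hGfin x),
    layerModular_le (pos_iff_ne_zero.2 hl0) ?_, ?_⟩
  · convert hGρ using 3 with x
    rw [mul_comm, ENNReal.mul_div_cancel_right (hpow0 _ (hθ'0 x)) (hpowt _ (hθ'0 x))]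
  · have hpoint : ∀ x, l * (H x / l ^ θ x * G x) = H x * (l ^ θ' x * G x) := fun x => by
      nth_rewrite 1 [← ENNReal.rpow_one l, ← hθθ' x,
        ENNReal.rpow_add_of_nonneg _ _ (hθ0 x) (hθ'0 x)]
      rw [mul_mul_mul_comm, ENNReal.mul_div_cancel (hpow0 _ (hθ0 x)) (hpowt _ (hθ0 x))]
    calc l = l * 1 := (mul_one l).symm
      _ ≤ l * ∫⁻ x, H x / l ^ θ x * G x := by gcongr
      _ = ∫⁻ x, H x * (l ^ θ' x * G x) := by
          rw [← lintegral_const_mul' _ _ hlt]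
          exact lintegral_congr hpoint

lemma exists_norming_of_one_lt_mixedModular {p q p' q' : En n → ℝ≥0∞} (hp : Measurable p)
    (hq : Measurable q) (hpp' : ∀ x, (p x).HolderConjugate (p' x))
    (hqq' : ∀ x, (q x).HolderConjugate (q' x)) {H : ℕ → En n → ℝ≥0∞}
    (hH : ∀ j, Measurable (H j)) (hHfin : ∀ j x, H j x ≠ ∞) (h1 : 1 < mixedModular q p H) :
    ∃ G : ℕ → En n → ℝ≥0∞, (∀ j, Measurable (G j)) ∧ (∀ j x, G j x ≠ ∞) ∧
      mixedModular q' p' G ≤ 1 ∧ 1 ≤ ∑' j, ∫⁻ x, H j x * G j x := by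
  set θ : En n → ℝ := fun x => ((q x)⁻¹).toReal
  set θ' : En n → ℝ := fun x => ((q' x)⁻¹).toReal
  have hθθ' : ∀ x, θ x + θ' x = 1 := fun x => toReal_inv_add_toReal_inv (hqq' x)
  have hθ : Measurable θ := hq.inv.ennreal_toReal
  have hθ' : Measurable θ' := by
    rw [show θ' = fun x => 1 - θ x from funext fun x => eq_sub_of_add_eq' (hθθ' x)]
    exact measurable_const.sub hθ
  obtain ⟨l, hl1, hl⟩ := exists_tsum_eq_one_of_one_lt_tsum h1
  choose G hGm hGfin hGl hlG using fun j => exists_layer_norming hp hpp' hθ hθ'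
    (fun _ => ENNReal.toReal_nonneg) (fun _ => ENNReal.toReal_nonneg) hθθ' (hH j) (hHfin j) (hl j)
  exact ⟨G, hGm, hGfin, (ENNReal.tsum_le_tsum hGl).trans hl1.le,
    hl1.symm.le.trans (ENNReal.tsum_le_tsum hlG)⟩

lemma exists_norming_of_lt_mixedNorm {p q p' q' : En n → ℝ≥0∞} (hp : Measurable p)
    (hq : Measurable q) (hpp' : ∀ x, (p x).HolderConjugate (p' x))
    (hqq' : ∀ x, (q x).HolderConjugate (q' x)) {F : ℕ → En n → ℝ≥0∞}
    (hF : ∀ j, Measurable (F j)) (hFfin : ∀ j x, F j x ≠ ∞) {m : ℝ≥0∞} (hm0 : m ≠ 0)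
    (hm : m < mixedNorm q p F) :
    ∃ G : ℕ → En n → ℝ≥0∞, (∀ j, Measurable (G j)) ∧ (∀ j x, G j x ≠ ∞) ∧
      mixedNorm q' p' G ≤ 1 ∧ m ≤ ∑' j, ∫⁻ x, F j x * G j x := by
  have hmt : m ≠ ∞ := hm.ne_top
  obtain ⟨G, hGm, hGfin, hG1, hFG⟩ := exists_norming_of_one_lt_mixedModular
    (H := fun j x => F j x / m) hp hq hpp' hqq' (fun j => (hF j).div measurable_const)
    (fun j x => ENNReal.div_ne_top (hFfin j x) hm0)
    (one_lt_mixedModular_div_of_lt_mixedNorm (pos_iff_ne_zero.2 hm0) hm)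
  refine ⟨G, hGm, hGfin, mixedNorm_le_one_of_mixedModular_le_one hG1, ?_⟩
  calc m = m * 1 := (mul_one m).symm
    _ ≤ m * ∑' j, ∫⁻ x, F j x / m * G j x := by gcongr
    _ = ∑' j, ∫⁻ x, F j x * G j x := by
        rw [← ENNReal.tsum_mul_left]
        refine tsum_congr fun j => ?_
        rw [← lintegral_const_mul' _ _ hmt]
        simp_rw [← mul_assoc, ENNReal.mul_div_cancel hm0 hmt]

lemma measurable_nnAbs {f : En n → ℝ} (hf : Measurable f) : Measurable (nnAbs f) :=
  hf.abs.ennreal_ofReal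

lemma nnAbs_toReal {G : En n → ℝ≥0∞} (hG : ∀ x, G x ≠ ∞) :
    nnAbs (fun x => (G x).toReal) = G :=
  funext fun x => by simp [nnAbs, hG x]

end

theorem stmt6_general {n : ℕ} (p q p' q' : En n → ℝ≥0∞)
    (hp : IsExponent p) (hq : IsExponent q)
    (hpc : ∀ x, (p x)⁻¹ + (p' x)⁻¹ = 1) (hqc : ∀ x, (q x)⁻¹ + (q' x)⁻¹ = 1) :
    ∃ c₁ c₂ : ℝ≥0∞, c₁ ≠ ∞ ∧ c₂ ≠ ∞ ∧ ∀ f : ℕ → En n → ℝ,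
      (∀ j, Measurable (f j)) → mixedNorm q p (fun j => nnAbs (f j)) ≠ ∞ →
      mixedNorm q p (fun j => nnAbs (f j)) ≤
          c₁ * (⨆ g ∈ {g : ℕ → En n → ℝ | (∀ j, Measurable (g j)) ∧
                  mixedNorm q' p' (fun j => nnAbs (g j)) ≤ 1},
                ∑' j, ∫⁻ x, nnAbs (f j) x * nnAbs (g j) x) ∧
      (⨆ g ∈ {g : ℕ → En n → ℝ | (∀ j, Measurable (g j)) ∧
                  mixedNorm q' p' (fun j => nnAbs (g j)) ≤ 1},
            ∑' j, ∫⁻ x, nnAbs (f j) x * nnAbs (g j) x) ≤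
          c₂ * mixedNorm q p (fun j => nnAbs (f j)) := by
  have hpp' : ∀ x, (p x).HolderConjugate (p' x) := fun x => holderConjugate_iff.2 (hpc x)
  have hqq' : ∀ x, (q x).HolderConjugate (q' x) := fun x => holderConjugate_iff.2 (hqc x)
  refine ⟨1, 4, one_ne_top, ofNat_ne_top, fun f hf hfin => ⟨?_, ?_⟩⟩
  · rw [one_mul]
    refine le_of_forall_lt_imp_le_of_dense fun m hm => ?_
    rcases eq_or_ne m 0 with rfl | hm0
    · exact zero_le
    obtain ⟨G, hGm, hGfin, hG1, hmG⟩ := exists_norming_of_lt_mixedNorm hp.1 hq.1 hpp' hqq'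
      (fun j => measurable_nnAbs (hf j)) (fun _ _ => ofReal_ne_top) hm0 hm
    refine hmG.trans (le_iSup₂_of_le (fun j x => (G j x).toReal)
      ⟨fun j => (hGm j).ennreal_toReal, ?_⟩ ?_) <;> simp only [nnAbs_toReal (hGfin _), le_refl, hG1]
  · refine iSup₂_le fun g ⟨_, hg⟩ => ?_
    calc _ ≤ 4 * (mixedNorm q p (fun j => nnAbs (f j)) * mixedNorm q' p' (fun j => nnAbs (g j))) :=
          tsum_lintegral_mul_le_mixedNorm_mul hp.1 hq.1 hpp' hqq'
            (fun j => measurable_nnAbs (hf j)) hfin (ne_top_of_le_ne_top one_ne_top hg)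
      _ ≤ 4 * mixedNorm q p (fun j => nnAbs (f j)) := by
          grw [hg, mul_one]

/-- the norm conjugate (duality) formula for `ℓ^{q(·)}(L^{p(·)})`. -/
theorem stmt6 {n : ℕ} (p q p' q' : En n → ℝ≥0∞)
    (hp : IsExponent p) (hq : IsExponent q) (hp' : Measurable p') (hq' : Measurable q')
    (hpc : ∀ x, (p x)⁻¹ + (p' x)⁻¹ = 1) (hqc : ∀ x, (q x)⁻¹ + (q' x)⁻¹ = 1) :
    ∃ c₁ c₂ : ℝ≥0∞, c₁ ≠ ∞ ∧ c₂ ≠ ∞ ∧ ∀ f : ℕ → En n → ℝ,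
      (∀ j, Measurable (f j)) → mixedNorm q p (fun j => nnAbs (f j)) ≠ ∞ →
      mixedNorm q p (fun j => nnAbs (f j)) ≤
          c₁ * (⨆ g ∈ {g : ℕ → En n → ℝ | (∀ j, Measurable (g j)) ∧
                  mixedNorm q' p' (fun j => nnAbs (g j)) ≤ 1},
                ∑' j, ∫⁻ x, nnAbs (f j) x * nnAbs (g j) x) ∧
      (⨆ g ∈ {g : ℕ → En n → ℝ | (∀ j, Measurable (g j)) ∧
                  mixedNorm q' p' (fun j => nnAbs (g j)) ≤ 1},
            ∑' j, ∫⁻ x, nnAbs (f j) x * nnAbs (g j) x) ≤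
          c₂ * mixedNorm q p (fun j => nnAbs (f j)) :=
  stmt6_general p q p' q' hp hq hpc hqc
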